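/- arXiv:1808.07762 — 3 statements merged into one kernel-verified Lean document; each statement's English description precedes it below -/
import Mathlib

section
/- Let (V, E, o, t, inv) be a finite connected multigraph with Betti number β = #E/2 − #V + 1. Then for every integer n with 0 ≤ n ≤ β there exists a 1-form α : E → ℝ with values in (−π, π] such that every minimal form φ in F(α) satisfies (1/2)·#supp φ = n; equivalently, the minimum of (1/2)·#supp b over all 1-forms b with the same flux function as α equals n. (Paper: Proposition 2.2(ii): for any integer n ∈ [0, β] there exists a magnetic potential α with invariant I_α = n, stated on the fundamental graph.) -/
open scoped Classical
open Finset

noncomputable section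

/-- The degree of a vertex: the number of oriented edges starting at it. -/
def mdeg {V E : Type} [Fintype E] (o : E → V) (v : V) : ℕ :=
  (Finset.univ.filter fun e => o e = v).card

/-- The combinatorial magnetic Laplacian `Δ_α`. -/
def magLap {V E : Type} [Fintype E] (o t : E → V) (α : E → ℝ)
    (f : V → ℂ) (v : V) : ℂ :=
  ∑ e ∈ Finset.univ.filter (fun e => o e = v),
    (f v - Complex.exp (Complex.I * (α e : ℂ)) * f (t e))

/-- The fiber magnetic Laplacian `Δ_{m,φ}(θ)`. -/
def fiberLap {V E : Type} [Fintype E] {d : ℕ} (o t : E → V)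
    (m : E → Fin d → ℝ) (φ : E → ℝ) (θ : Fin d → ℝ) (f : V → ℂ) (v : V) : ℂ :=
  (mdeg o v : ℂ) * f v -
    ∑ e ∈ Finset.univ.filter (fun e => o e = v),
      Complex.exp (Complex.I * ((φ e + ∑ i, m e i * θ i : ℝ) : ℂ)) * f (t e)

/-- Standard inner product on `ℂ^V` (conjugate-linear in the first argument). -/
def dotC {V : Type} [Fintype V] (f g : V → ℂ) : ℂ :=
  ∑ v, (starRingEnd ℂ) (f v) * g v

/-- `lam` lists the eigenvalues of the operator `T` on `ℂ^V` in nondecreasing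
order, counted with multiplicity (witnessed by an orthonormal eigenbasis). -/
def IsEigList {V : Type} [Fintype V] (T : (V → ℂ) → (V → ℂ))
    (lam : Fin (Fintype.card V) → ℝ) : Prop :=
  Monotone lam ∧ ∃ u : Fin (Fintype.card V) → (V → ℂ),
    (∀ i j, dotC (u i) (u j) = if i = j then (1 : ℂ) else 0) ∧
    ∀ i, T (u i) = fun v => ((lam i : ℝ) : ℂ) * u i v

/-- A closed walk in the multigraph. -/
def IsClosedWalk {V E : Type} (o t : E → V) {k : ℕ} (c : Fin (k + 1) → E) : Prop :=
  (∀ i : Fin k, t (c i.castSucc) = o (c i.succ)) ∧ t (c (Fin.last k)) = o (c 0)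

/-- Two forms have the same flux along every closed walk. -/
def SameFlux {V E W : Type} [AddCommMonoid W] (o t : E → V) (b b' : E → W) : Prop :=
  ∀ (k : ℕ) (c : Fin (k + 1) → E), IsClosedWalk o t c →
    ∑ i, b (c i) = ∑ i, b' (c i)

/-- Connectivity of the multigraph: any two distinct vertices are the endpoints
of some walk. -/
def MGConnected {V E : Type} (o t : E → V) : Prop :=
  ∀ u v : V, u ≠ v → ∃ (k : ℕ) (c : Fin (k + 1) → E),
    (∀ i : Fin k, t (c i.castSucc) = o (c i.succ)) ∧ o (c 0) = u ∧ t (c (Fin.last k)) = v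

/-- The set of fluxes of a form along all closed walks. -/
def fluxSet {V E W : Type} [AddCommMonoid W] (o t : E → V) (b : E → W) : Set W :=
  {w | ∃ (k : ℕ) (c : Fin (k + 1) → E), IsClosedWalk o t c ∧ ∑ i, b (c i) = w}

/-- The number of oriented edges in the support of a form. -/
def suppCard {E : Type} [Fintype E] {W : Type} [Zero W] (b : E → W) : ℕ :=
  (Finset.univ.filter fun e => b e ≠ 0).card

/-- The integer lattice `ℤ^d` inside `ℝ^d`. -/
def intLattice (d : ℕ) : Set (Fin d → ℝ) :=
  {w | ∀ i, ∃ z : ℤ, w i = (z : ℝ)}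

/-! Take a spanning tree of the multigraph: off the tree there are at least `β` geometric edges.
Put `ℚ`-linearly independent values `x₁, …, xₙ ∈ (0, π)` on `n` of them (and `-xᵢ` on the reversed
edges), `0` elsewhere. The fundamental cycle of the `i`-th chosen edge has flux `xᵢ`, so every form
`b` with the same fluxes has all `xᵢ` in the `ℚ`-span of its values. As `b` is antisymmetric, that
span is spanned by the values on one orientation of each edge of `supp b`, so its dimension is at
most `#supp b / 2`; hence `#supp b ≥ 2n`, with equality for the form just built. -/

theorem exists_rat_smul_mem_Ioo {x c : ℝ} (hx : x ≠ 0) (hc : 0 < c) :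
    ∃ q : ℚ, q ≠ 0 ∧ (q : ℝ) * x ∈ Set.Ioo 0 c := by
  obtain ⟨q, hq0, hqc⟩ := exists_rat_btwn (div_pos hc (abs_pos.mpr hx))
  have hq : (0 : ℝ) < q * |x| ∧ q * |x| < c :=
    ⟨by positivity, (lt_div_iff₀ (abs_pos.mpr hx)).mp hqc⟩
  rcases hx.lt_or_gt with hneg | hpos
  · refine ⟨-q, by exact_mod_cast (neg_ne_zero.mpr hq0.ne'), ?_⟩
    rw [abs_of_neg hneg] at hq
    push_cast
    constructor <;> linarith [hq.1, hq.2]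
  · refine ⟨q, by exact_mod_cast hq0.ne', ?_⟩
    rwa [abs_of_pos hpos] at hq

theorem exists_linearIndependent_rat_mem_Ioo (ι : Type*) [Finite ι] {c : ℝ} (hc : 0 < c) :
    ∃ x : ι → ℝ, LinearIndependent ℚ x ∧ ∀ i, x i ∈ Set.Ioo 0 c := by
  have := Fintype.ofFinite ι
  obtain ⟨y, hy⟩ : ∃ y : Fin (Fintype.card ι) → ℝ, LinearIndependent ℚ y :=
    exists_linearIndependent_of_le_rank
      (Real.rank_rat_real ▸ (Cardinal.nat_lt_continuum _).le)
  have hy' := hy.comp _ (Fintype.equivFin ι).injective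
  choose q hq0 hq using fun i =>
    exists_rat_smul_mem_Ioo (hy'.ne_zero i) hc
  exact ⟨fun i => (q i : ℝ) * y (Fintype.equivFin ι i),
    hy'.units_smul (fun i => Units.mk0 (q i) (hq0 i)), hq⟩

section Involution

variable {E : Type} {inv : E → E}

theorem card_union_image_eq_two_mul (hinv : Function.Involutive inv) {R : Finset E}
    (hR : ∀ e ∈ R, inv e ∉ R) : (R ∪ R.image inv).card = 2 * R.card := by
  rw [card_union_of_disjoint, card_image_of_injective _ hinv.injective, two_mul]
  refine disjoint_left.mpr fun e he he' => ?_
  obtain ⟨r, hr, rfl⟩ := mem_image.mp he'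
  exact hR r hr he

theorem exists_orientation (hfp : ∀ e, inv e ≠ e) (hinv : Function.Involutive inv)
    (S : Finset E) (hS : ∀ e ∈ S, inv e ∈ S) :
    ∃ R : Finset E, (∀ e ∈ R, inv e ∉ R) ∧ R ∪ R.image inv = S := by
  refine ⟨S.filter fun e => WellOrderingRel e (inv e), ?_, ?_⟩
  · intro e he he'
    have h' := (mem_filter.mp he').2
    rw [hinv e] at h'
    exact asymm (mem_filter.mp he).2 h'
  · ext e
    simp only [mem_union, mem_filter, mem_image]
    constructor
    · rintro (⟨he, -⟩ | ⟨r, ⟨hr, -⟩, rfl⟩)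
      exacts [he, hS r hr]
    · intro he
      rcases trichotomous_of WellOrderingRel e (inv e) with h | h | h
      · exact Or.inl ⟨he, h⟩
      · exact absurd h.symm (hfp e)
      · exact Or.inr ⟨inv e, ⟨hS e he, by rwa [hinv]⟩, hinv e⟩

end Involution

section OddExtension

variable {E W : Type} [AddGroup W] {inv : E → E} {R : Finset E}

def oddExtension (inv : E → E) (R : Finset E) (x : E → W) (e : E) : W :=
  if e ∈ R then x e else if inv e ∈ R then -x (inv e) else 0

theorem oddExtension_of_mem (x : E → W) {e : E} (he : e ∈ R) : oddExtension inv R x e = x e :=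
  if_pos he

theorem oddExtension_eq_zero (x : E → W) {e : E} (he : e ∉ R) (he' : inv e ∉ R) :
    oddExtension inv R x e = 0 := by
  simp [oddExtension, he, he']

theorem oddExtension_inv (hinv : Function.Involutive inv) (hR : ∀ e ∈ R, inv e ∉ R)
    (x : E → W) (e : E) : oddExtension inv R x (inv e) = -oddExtension inv R x e := by
  unfold oddExtension
  rw [hinv e]
  by_cases he : e ∈ R
  · simp [he, hR e he]
  · by_cases he' : inv e ∈ R <;> simp [he, he']

theorem suppCard_oddExtension [Fintype E] (hinv : Function.Involutive inv)
    (hR : ∀ e ∈ R, inv e ∉ R) {x : E → W} (hx : ∀ e ∈ R, x e ≠ 0) :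
    suppCard (oddExtension inv R x) = 2 * R.card := by
  rw [suppCard, ← card_union_image_eq_two_mul hinv hR]
  congr 1
  ext e
  simp only [mem_filter, mem_univ, true_and, mem_union, mem_image]
  constructor
  · intro h
    by_contra! hcon
    exact h (oddExtension_eq_zero x hcon.1 fun he => hcon.2 _ he (hinv e))
  · rintro (he | ⟨r, hr, rfl⟩)
    · rw [oddExtension_of_mem x he]
      exact hx e he
    · rw [oddExtension_inv hinv hR, oddExtension_of_mem x hr, neg_ne_zero]
      exact hx r hr

theorem oddExtension_mem_Ioo {x : E → ℝ} {c : ℝ} (hx : ∀ e, x e ∈ Set.Ioo 0 c) (e : E) :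
    oddExtension inv R x e ∈ Set.Ioo (-c) c := by
  obtain ⟨hx₁, hx₂⟩ := hx e
  obtain ⟨hy₁, hy₂⟩ := hx (inv e)
  unfold oddExtension
  split_ifs <;> constructor <;> linarith

end OddExtension

section Flux

variable {V E W : Type}

theorem fluxSet_subset_span {K : Type} [Semiring K] [AddCommMonoid W] [Module K W] (o t : E → V)
    (b : E → W) : fluxSet o t b ⊆ Submodule.span K (Set.range b) := by
  rintro _ ⟨k, c, -, rfl⟩
  exact Submodule.sum_mem _ fun i _ => Submodule.subset_span ⟨c i, rfl⟩

theorem SameFlux.fluxSet_subset [AddCommMonoid W] {o t : E → V} {a b : E → W}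
    (h : SameFlux o t a b) : fluxSet o t a ⊆ fluxSet o t b := by
  rintro _ ⟨k, c, hc, rfl⟩
  exact ⟨k, c, hc, (h k c hc).symm⟩

end Flux

section Forms

variable {V E W K : Type} [Fintype E] {inv : E → E}

theorem two_mul_finrank_span_range_le_suppCard [DivisionRing K] [AddCommGroup W] [Module K W]
    (hfp : ∀ e, inv e ≠ e) (hinv : Function.Involutive inv) (b : E → W)
    (hb : ∀ e, b (inv e) = -b e) :
    2 * Module.finrank K (Submodule.span K (Set.range b)) ≤ suppCard b := by
  obtain ⟨R, hR, hRS⟩ := exists_orientation hfp hinv (univ.filter fun e => b e ≠ 0)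
    (fun e he => by simpa [hb] using he)
  have hspan : Submodule.span K (Set.range b) ≤ Submodule.span K (R.image b : Set W) := by
    refine Submodule.span_le.mpr ?_
    rintro _ ⟨e, rfl⟩
    by_cases he : b e = 0
    · simp [he]
    have he : e ∈ R ∪ R.image inv := hRS ▸ mem_filter.mpr ⟨mem_univ e, he⟩
    rcases mem_union.mp he with he | he
    · exact Submodule.subset_span (mem_image_of_mem b he)
    · obtain ⟨r, hr, rfl⟩ := mem_image.mp he
      rw [hb]
      exact neg_mem (Submodule.subset_span (mem_image_of_mem b hr))
  calc 2 * Module.finrank K (Submodule.span K (Set.range b))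
      ≤ 2 * (R.image b : Set W).finrank K := by
        gcongr
        exact Submodule.finrank_mono hspan
    _ ≤ 2 * R.card := by
        gcongr
        exact (finrank_span_finset_le_card _).trans card_image_le
    _ = suppCard b := by rw [suppCard, ← hRS, card_union_image_eq_two_mul hinv hR]

theorem two_mul_card_le_suppCard [DivisionRing K] [AddCommGroup W] [Module K W] {ι : Type}
    [Fintype ι] (o t : E → V) (hfp : ∀ e, inv e ≠ e) (hinv : Function.Involutive inv)
    {b : E → W} (hb : ∀ e, b (inv e) = -b e) {x : ι → W} (hx : LinearIndependent K x)
    (hxb : ∀ i, x i ∈ fluxSet o t b) : 2 * Fintype.card ι ≤ suppCard b := by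
  have : Module.Finite K (Submodule.span K (Set.range b)) :=
    FiniteDimensional.span_of_finite K (Set.finite_range b)
  have hle : Submodule.span K (Set.range x) ≤ Submodule.span K (Set.range b) :=
    Submodule.span_le.mpr (Set.range_subset_iff.mpr fun i => fluxSet_subset_span o t b (hxb i))
  calc 2 * Fintype.card ι = 2 * Module.finrank K (Submodule.span K (Set.range x)) := by
        rw [finrank_span_eq_card hx]
    _ ≤ 2 * Module.finrank K (Submodule.span K (Set.range b)) := by
        gcongr
        exact Submodule.finrank_mono hle
    _ ≤ suppCard b := two_mul_finrank_span_range_le_suppCard hfp hinv b hb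

end Forms

section Walks

variable {V E : Type} (o t : E → V)

def MGAdj (D : Set E) (u v : V) : Prop := ∃ e ∈ D, o e = u ∧ t e = v

theorem exists_walk_of_reflTransGen {D : Set E} (e : E) {v : V}
    (h : Relation.ReflTransGen (MGAdj o t D) (t e) v) :
    ∃ (k : ℕ) (c : Fin (k + 1) → E), c 0 = e ∧ (∀ j : Fin k, c j.succ ∈ D) ∧
      (∀ j : Fin k, t (c j.castSucc) = o (c j.succ)) ∧ t (c (Fin.last k)) = v := by
  induction h with
  | refl => exact ⟨0, fun _ => e, rfl, Fin.elim0, Fin.elim0, rfl⟩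
  | tail _ hstep ih =>
    obtain ⟨f, hfD, hfo, rfl⟩ := hstep
    obtain ⟨k, c, hc0, hcD, hchain, rfl⟩ := ih
    refine ⟨k + 1, Fin.snoc c f, by rw [← Fin.castSucc_zero, Fin.snoc_castSucc, hc0], ?_, ?_, ?_⟩
    · intro j
      induction j using Fin.lastCases with
      | last => simpa using hfD
      | cast j => rw [Fin.succ_castSucc, Fin.snoc_castSucc]; exact hcD j
    · intro j
      induction j using Fin.lastCases with
      | last => simpa using hfo.symm
      | cast j =>
        rw [Fin.succ_castSucc, Fin.snoc_castSucc, Fin.snoc_castSucc]; exact hchain j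
    · simp

theorem mem_fluxSet_of_reflTransGen {W : Type} [AddCommMonoid W] {D : Set E} {b : E → W}
    (hbD : ∀ f ∈ D, b f = 0) {e : E} (h : Relation.ReflTransGen (MGAdj o t D) (t e) (o e)) :
    b e ∈ fluxSet o t b := by
  obtain ⟨k, c, hc0, hcD, hchain, hclose⟩ := exists_walk_of_reflTransGen o t e h
  refine ⟨k, c, ⟨hchain, hc0 ▸ hclose⟩, ?_⟩
  rw [Fin.sum_univ_succ, hc0, sum_eq_zero fun j _ => hbD _ (hcD j), add_zero]

end Walks

section Spanning

variable {V E : Type} (o t : E → V)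

def underlyingGraph : SimpleGraph V := SimpleGraph.fromRel fun u v => ∃ e, o e = u ∧ t e = v

theorem underlyingGraph_reachable (e : E) : (underlyingGraph o t).Reachable (o e) (t e) := by
  by_cases h : o e = t e
  · rw [h]
  · exact SimpleGraph.Adj.reachable ⟨h, Or.inl ⟨e, rfl, rfl⟩⟩

variable {o t}

theorem MGConnected.connected_underlyingGraph [Nonempty V] (h : MGConnected o t) :
    (underlyingGraph o t).Connected := by
  refine ⟨fun u v => ?_⟩
  by_cases huv : u = v
  · rw [huv]
  obtain ⟨k, c, hchain, rfl, rfl⟩ := h u v huv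
  suffices ∀ j, (underlyingGraph o t).Reachable (o (c 0)) (t (c j)) from this (Fin.last k)
  intro j
  induction j using Fin.induction with
  | zero => exact underlyingGraph_reachable o t _
  | succ j ih => exact ih.trans (hchain j ▸ underlyingGraph_reachable o t _)

theorem exists_spanning_finset [Fintype V] [Nonempty V] {inv : E → E}
    (hinv : Function.Involutive inv) (hoi : ∀ e, o (inv e) = t e) (hti : ∀ e, t (inv e) = o e)
    (hconn : MGConnected o t) :
    ∃ D : Finset E, (∀ e ∈ D, inv e ∈ D) ∧ D.card ≤ 2 * (Fintype.card V - 1) ∧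
      ∀ u v, Relation.ReflTransGen (MGAdj o t D) u v := by
  obtain ⟨T, hTG, hT⟩ := hconn.connected_underlyingGraph.exists_isTree_le
  have hlift : ∀ s : T.edgeSet, ∃ e, s(o e, t e) = s := by
    rintro ⟨s, hs⟩
    induction s using Sym2.ind with
    | h u v =>
      obtain ⟨-, ⟨e, rfl, rfl⟩ | ⟨e, rfl, rfl⟩⟩ := hTG hs
      exacts [⟨e, rfl⟩, ⟨e, Sym2.eq_swap⟩]
  choose c hc using hlift
  refine ⟨univ.image c ∪ univ.image (inv ∘ c), ?_, ?_, fun u v => ?_⟩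
  · simp only [mem_union, mem_image, mem_univ, true_and, Function.comp_apply]
    rintro _ (⟨s, rfl⟩ | ⟨s, rfl⟩)
    exacts [Or.inr ⟨s, rfl⟩, Or.inl ⟨s, (hinv _).symm⟩]
  · calc _ ≤ (univ.image c).card + (univ.image (inv ∘ c)).card := card_union_le _ _
      _ ≤ Fintype.card T.edgeSet + Fintype.card T.edgeSet :=
        add_le_add card_image_le card_image_le
      _ = 2 * (Fintype.card V - 1) := by
        rw [← SimpleGraph.edgeFinset_card, ← hT.card_edgeFinset]
        omega
  refine Relation.ReflTransGen.mono (fun a b hab => ?_) u v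
    ((SimpleGraph.reachable_iff_reflTransGen u v).mp (hT.connected u v))
  rcases Sym2.eq_iff.mp (hc ⟨s(a, b), hab⟩) with ⟨ha, hb⟩ | ⟨hb, ha⟩
  · exact ⟨c ⟨s(a, b), hab⟩, by simp, ha, hb⟩
  · exact ⟨inv (c ⟨s(a, b), hab⟩), by simp, by rw [hoi, ha], by rw [hti, hb]⟩

theorem exists_closing_edges [Fintype V] [Fintype E] [Nonempty V] {inv : E → E}
    (hfp : ∀ e, inv e ≠ e) (hinv : Function.Involutive inv) (hoi : ∀ e, o (inv e) = t e)
    (hti : ∀ e, t (inv e) = o e) (hconn : MGConnected o t) {n : ℕ}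
    (hn : (2 * n : ℤ) ≤ (Fintype.card E : ℤ) - 2 * Fintype.card V + 2) :
    ∃ R : Finset E, R.card = n ∧ (∀ e ∈ R, inv e ∉ R) ∧
      ∀ e ∈ R, Relation.ReflTransGen (MGAdj o t {f | f ∉ R ∧ inv f ∉ R}) (t e) (o e) := by
  obtain ⟨D, hDinv, hDcard, hDconn⟩ := exists_spanning_finset hinv hoi hti hconn
  obtain ⟨R, hR, hRD⟩ := exists_orientation hfp hinv Dᶜ fun e he =>
    mem_compl.mpr fun he' => mem_compl.mp he (hinv e ▸ hDinv _ he')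
  have hnR : n ≤ R.card := by
    have := card_union_image_eq_two_mul hinv hR
    rw [hRD, card_compl] at this
    have := Fintype.card_pos (α := V)
    omega
  obtain ⟨R₀, hR₀R, rfl⟩ := exists_subset_card_eq hnR
  have hR₀D : ∀ e ∈ R₀, e ∉ D := fun e he => mem_compl.mp (hRD ▸ mem_union_left _ (hR₀R he))
  refine ⟨R₀, rfl, fun e he he' => hR e (hR₀R he) (hR₀R he'), fun e _ => ?_⟩
  refine Relation.ReflTransGen.mono ?_ _ _ (hDconn _ _)
  rintro u v ⟨f, hf, hfuv⟩
  exact ⟨f, ⟨fun h => hR₀D f h hf, fun h => hR₀D _ h (hDinv f hf)⟩, hfuv⟩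

end Spanning

/-- For every integer `n` with `0 ≤ n ≤ β` there exists a 1-form
`α : E → (−π, π]` such that the minimum of `(1/2)·#supp b` over all 1-forms
`b` with the same flux function as `α` equals `n`; equivalently, some minimal
form in `F(α)` has support of cardinality `2n` and every minimal form in
`F(α)` does. -/
theorem exists_magnetic_potential_with_invariant
    {V E : Type} [Fintype V] [Fintype E] [Nonempty V]
    (o t : E → V) (inv : E → E)
    (hfp : ∀ e, inv e ≠ e) (hinv : ∀ e, inv (inv e) = e)
    (hoi : ∀ e, o (inv e) = t e) (hti : ∀ e, t (inv e) = o e)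
    (hconn : MGConnected o t)
    (n : ℕ)
    (hn : (2 * n : ℤ) ≤ (Fintype.card E : ℤ) - 2 * Fintype.card V + 2) :
    ∃ α : E → ℝ, (∀ e, α (inv e) = - α e) ∧
      (∀ e, α e ∈ Set.Ioc (-Real.pi) Real.pi) ∧
      (∃ φ : E → ℝ, (∀ e, φ (inv e) = - φ e) ∧ SameFlux o t α φ ∧
        (∀ b : E → ℝ, (∀ e, b (inv e) = - b e) → SameFlux o t α b →
          suppCard φ ≤ suppCard b) ∧ suppCard φ = 2 * n) ∧
      ∀ ψ : E → ℝ, (∀ e, ψ (inv e) = - ψ e) → SameFlux o t α ψ →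
        (∀ b : E → ℝ, (∀ e, b (inv e) = - b e) → SameFlux o t α b →
          suppCard ψ ≤ suppCard b) → suppCard ψ = 2 * n := by
  obtain ⟨R, rfl, hR, hcycle⟩ := exists_closing_edges hfp hinv hoi hti hconn hn
  obtain ⟨x, hxind, hxpos⟩ := exists_linearIndependent_rat_mem_Ioo E Real.pi_pos
  set α := oddExtension inv R x
  have hαinv : ∀ e, α (inv e) = -α e := oddExtension_inv hinv hR x
  have hαsupp : suppCard α = 2 * R.card :=
    suppCard_oddExtension hinv hR fun e _ => (hxpos e).1.ne'
  have hlower (b : E → ℝ) (hb : ∀ e, b (inv e) = -b e) (hαb : SameFlux o t α b) :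
      2 * R.card ≤ suppCard b := by
    rw [← Fintype.card_coe R]
    refine two_mul_card_le_suppCard o t hfp hinv hb (hxind.comp _ Subtype.val_injective)
      fun e => hαb.fluxSet_subset ?_
    rw [Function.comp_apply, ← oddExtension_of_mem x e.2]
    exact mem_fluxSet_of_reflTransGen o t (fun f hf => oddExtension_eq_zero x hf.1 hf.2)
      (hcycle e e.2)
  exact ⟨α, hαinv, fun e => Set.Ioo_subset_Ioc_self (oddExtension_mem_Ioo hxpos e),
    ⟨α, hαinv, fun _ _ _ => rfl, fun b hb hαb => hαsupp ▸ hlower b hb hαb, hαsupp⟩,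
    fun ψ hψ hαψ hmin => le_antisymm (hαsupp ▸ hmin α hαinv fun _ _ _ => rfl) (hlower ψ hψ hαψ)⟩
end
end

section
/- For every nonnegative integer M and every positive integer N there exist a finite connected multigraph (V, E, o, t, inv) with Betti number β = #E/2 − #V + 1, a 1-form x : E → ℝ^N whose set of fluxes along all closed walks equals ℤ^N, and a 1-form α : E → ℝ, such that β − I = M and β − I_α = N, where I = min{(1/2)·#supp b : b ∈ F(x)} and I_α = min{(1/2)·#supp b : b ∈ F(α)}. (Paper: Proposition 2.2(iii): the differences between the Betti number and the invariants I and I_α can be arbitrarily prescribed; stated on the fundamental graph, where the periodic graph corresponds to the pair (multigraph, 1-form x with flux image ℤ^N).) -/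
open scoped Classical
open Finset

noncomputable section

/-!
Take the bouquet of `N + M` loops at a single vertex, so `β = N + M`. Put the standard basis
vectors of `ℝ^N` on `N` of the loops and `0` on the others to get `x`, and put `1` on the other
`M` loops to get `α`. With one vertex every edge is itself a closed walk, so a 1-form is
determined by its fluxes: `F(x) = {x}` and `F(α) = {α}`, whence `I = N` and `I_α = M`. The
flux set is the group generated by the values on the loops, which for `x` is `ℤ^N`.
-/

section OneVertex

variable {V E W : Type} [Subsingleton V] (o t : E → V)

theorem isClosedWalk_of_subsingleton {k : ℕ} (c : Fin (k + 1) → E) : IsClosedWalk o t c :=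
  ⟨fun _ => Subsingleton.elim _ _, Subsingleton.elim _ _⟩

theorem eq_of_sameFlux_of_subsingleton [AddCommMonoid W] {b b' : E → W}
    (h : SameFlux o t b b') : b = b' :=
  funext fun e => by
    simpa using h 0 (fun _ => e) (isClosedWalk_of_subsingleton o t _)

theorem fluxSet_eq_closure_range_of_subsingleton [AddCommGroup W] [Nonempty E]
    (inv : E → E) (b : E → W) (hb : ∀ e, b (inv e) = -b e) :
    fluxSet o t b = AddSubgroup.closure (Set.range b) := by
  have walk {k : ℕ} (c : Fin (k + 1) → E) := isClosedWalk_of_subsingleton o t c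
  have cons_mem : ∀ e, ∀ y ∈ fluxSet o t b, b e + y ∈ fluxSet o t b := by
    rintro e _ ⟨k, c, -, rfl⟩
    exact ⟨k + 1, Fin.cons e c, walk _, by simp [Fin.sum_univ_succ]⟩
  ext w
  constructor
  · rintro ⟨k, c, -, rfl⟩
    exact AddSubgroup.sum_mem _ fun i _ => AddSubgroup.subset_closure ⟨c i, rfl⟩
  · intro hw
    induction hw using AddSubgroup.closure_induction_left with
    | zero =>
      obtain ⟨e⟩ := ‹Nonempty E›
      exact ⟨1, ![e, inv e], walk _, by simp [hb]⟩
    | add_left _ hx _ _ hy =>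
      obtain ⟨e, rfl⟩ := hx
      exact cons_mem e _ hy
    | neg_add_cancel _ hx _ _ hy =>
      obtain ⟨e, rfl⟩ := hx
      simpa [hb] using cons_mem (inv e) _ hy

end OneVertex

section Bouquet

variable {n : ℕ} {W : Type}

theorem suppCard_eq_sum {m : ℕ} [Zero W] (b : Fin m → W) :
    suppCard b = ∑ e, if b e ≠ 0 then 1 else 0 :=
  Finset.card_filter _ _

theorem suppCard_append {m : ℕ} [Zero W] (a : Fin m → W) (b : Fin n → W) :
    suppCard (Fin.append a b) = suppCard a + suppCard b := by
  simp only [suppCard_eq_sum, Fin.sum_univ_add, Fin.append_left, Fin.append_right]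

theorem closure_range_append_zero [AddGroup W] {m : ℕ} (w : Fin m → W) :
    AddSubgroup.closure (Set.range (Fin.append w (0 : Fin n → W))) =
      AddSubgroup.closure (Set.range w) := by
  refine le_antisymm (AddSubgroup.closure_le _ |>.mpr ?_) (AddSubgroup.closure_mono ?_)
  · rintro _ ⟨j, rfl⟩
    induction j using Fin.addCases with
    | left i => simpa using AddSubgroup.subset_closure (Set.mem_range_self i)
    | right _ => simp
  · rintro _ ⟨i, rfl⟩
    exact ⟨Fin.castAdd n i, by simp⟩

/-- Edges `castAdd k` and `natAdd k` of `Fin (n + n)` are the two orientations of loop `k`. -/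
def bouquetInv (n : ℕ) (e : Fin (n + n)) : Fin (n + n) :=
  finSumFinEquiv (finSumFinEquiv.symm e).swap

def bouquetForm [Neg W] (w : Fin n → W) (e : Fin (n + n)) : W :=
  Sum.elim w (-w) (finSumFinEquiv.symm e)

theorem bouquetInv_ne (e : Fin (n + n)) : bouquetInv n e ≠ e := by
  obtain ⟨s, rfl⟩ := finSumFinEquiv.surjective e
  rw [bouquetInv, Equiv.symm_apply_apply, Ne, finSumFinEquiv.apply_eq_iff_eq]
  cases s <;> simp

theorem bouquetInv_bouquetInv (e : Fin (n + n)) : bouquetInv n (bouquetInv n e) = e := by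
  simp [bouquetInv]

theorem bouquetForm_bouquetInv [AddGroup W] (w : Fin n → W) (e : Fin (n + n)) :
    bouquetForm w (bouquetInv n e) = -bouquetForm w e := by
  obtain ⟨s, rfl⟩ := finSumFinEquiv.surjective e
  simp only [bouquetForm, bouquetInv, Equiv.symm_apply_apply]
  cases s <;> simp

theorem suppCard_bouquetForm [AddGroup W] (w : Fin n → W) :
    suppCard (bouquetForm w) = 2 * suppCard w := by
  simp only [suppCard_eq_sum, Fin.sum_univ_add, bouquetForm, finSumFinEquiv_symm_apply_castAdd,
    finSumFinEquiv_symm_apply_natAdd, Sum.elim_inl, Sum.elim_inr, Pi.neg_apply, neg_ne_zero]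
  ring

theorem closure_range_bouquetForm [AddGroup W] (w : Fin n → W) :
    AddSubgroup.closure (Set.range (bouquetForm w)) = AddSubgroup.closure (Set.range w) := by
  refine le_antisymm (AddSubgroup.closure_le _ |>.mpr ?_) (AddSubgroup.closure_mono ?_)
  · rintro _ ⟨e, rfl⟩
    obtain ⟨s, rfl⟩ := finSumFinEquiv.surjective e
    rcases s with k | k <;> simp only [bouquetForm, Equiv.symm_apply_apply, Sum.elim_inl,
      Sum.elim_inr, Pi.neg_apply]
    · exact AddSubgroup.subset_closure ⟨k, rfl⟩
    · exact neg_mem (AddSubgroup.subset_closure ⟨k, rfl⟩)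
  · rintro _ ⟨k, rfl⟩
    exact ⟨Fin.castAdd n k, by simp [bouquetForm]⟩

end Bouquet

theorem intLattice_eq_closure_range_single (d : ℕ) :
    intLattice d = AddSubgroup.closure (Set.range fun i : Fin d => Pi.single i (1 : ℝ)) := by
  ext w
  constructor
  · intro hw
    choose z hz using hw
    have hw : w = ∑ i, z i • Pi.single i (1 : ℝ) := by ext j; simp [hz, Pi.single_apply]
    rw [hw]
    exact AddSubgroup.sum_mem _ fun i _ =>
      AddSubgroup.zsmul_mem _ (AddSubgroup.subset_closure (Set.mem_range_self i)) _
  · intro hw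
    induction hw using AddSubgroup.closure_induction with
    | mem _ hx =>
      obtain ⟨i, rfl⟩ := hx
      intro j
      by_cases h : j = i
      · exact ⟨1, by simp [h]⟩
      · exact ⟨0, by simp [h]⟩
    | zero => exact fun _ => ⟨0, by simp⟩
    | add _ _ _ _ hx hy =>
      intro j
      obtain ⟨a, ha⟩ := hx j
      obtain ⟨b, hb⟩ := hy j
      exact ⟨a + b, by simp [ha, hb]⟩
    | neg _ _ hx =>
      intro j
      obtain ⟨a, ha⟩ := hx j
      exact ⟨-a, by simp [ha]⟩

/-- For every `M ≥ 0` and `N > 0` there are a finite connected multigraph, a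
1-form `x : E → ℝ^N` with flux set `ℤ^N`, and a 1-form `α : E → ℝ`, such that
`β − I = M` and `β − I_α = N`, where `β = #E/2 − #V + 1` is the Betti number,
`I = min {(1/2)·#supp b : b ∈ F(x)}` and `I_α = min {(1/2)·#supp b : b ∈ F(α)}`
(witnessed below by minimal forms `μ ∈ F(x)` and `φ ∈ F(α)`). -/
theorem exists_graph_with_prescribed_invariant_gaps (M N : ℕ) (hN : 0 < N) :
    ∃ (nv ne : ℕ) (o t : Fin ne → Fin nv) (inv : Fin ne → Fin ne),
      0 < nv ∧
      (∀ e, inv e ≠ e) ∧ (∀ e, inv (inv e) = e) ∧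
      (∀ e, o (inv e) = t e) ∧ (∀ e, t (inv e) = o e) ∧
      MGConnected o t ∧
      ∃ (x : Fin ne → Fin N → ℝ) (α : Fin ne → ℝ),
        (∀ e, x (inv e) = - x e) ∧ (∀ e, α (inv e) = - α e) ∧
        fluxSet o t x = intLattice N ∧
        ∃ (μ : Fin ne → Fin N → ℝ) (φ : Fin ne → ℝ),
          (∀ e, μ (inv e) = - μ e) ∧ SameFlux o t x μ ∧
          (∀ b : Fin ne → Fin N → ℝ, (∀ e, b (inv e) = - b e) → SameFlux o t x b →
            suppCard μ ≤ suppCard b) ∧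
          (∀ e, φ (inv e) = - φ e) ∧ SameFlux o t α φ ∧
          (∀ b : Fin ne → ℝ, (∀ e, b (inv e) = - b e) → SameFlux o t α b →
            suppCard φ ≤ suppCard b) ∧
          (suppCard μ : ℤ) = (ne : ℤ) - 2 * nv + 2 - 2 * M ∧
          (suppCard φ : ℤ) = (ne : ℤ) - 2 * nv + 2 - 2 * N := by
  set x := bouquetForm (Fin.append (fun i : Fin N => Pi.single i (1 : ℝ)) (0 : Fin M → _))
  set α := bouquetForm (Fin.append (0 : Fin N → ℝ) fun _ : Fin M => 1)
  let o : Fin ((N + M) + (N + M)) → Fin 1 := 0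
  have : Nonempty (Fin ((N + M) + (N + M))) := ⟨⟨0, by omega⟩⟩
  have hx : suppCard x = 2 * N := by
    rw [suppCard_bouquetForm, suppCard_append, suppCard_eq_sum, suppCard_eq_sum]; simp
  have hα : suppCard α = 2 * M := by
    rw [suppCard_bouquetForm, suppCard_append, suppCard_eq_sum, suppCard_eq_sum]; simp
  refine ⟨1, _, o, o, bouquetInv _, one_pos, bouquetInv_ne, bouquetInv_bouquetInv,
    fun _ => rfl, fun _ => rfl, fun u v huv => (huv (Subsingleton.elim u v)).elim,
    x, α, bouquetForm_bouquetInv _, bouquetForm_bouquetInv _, ?_,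
    x, α, bouquetForm_bouquetInv _, fun _ _ _ => rfl,
    fun b _ hb => (eq_of_sameFlux_of_subsingleton o o hb ▸ le_rfl),
    bouquetForm_bouquetInv _, fun _ _ _ => rfl,
    fun b _ hb => (eq_of_sameFlux_of_subsingleton o o hb ▸ le_rfl), ?_, ?_⟩
  · rw [fluxSet_eq_closure_range_of_subsingleton o o _ _ (bouquetForm_bouquetInv _),
      closure_range_bouquetForm, closure_range_append_zero, intLattice_eq_closure_range_single]
  · rw [hx]; push_cast; ring
  · rw [hα]; push_cast; ring
end
end

section
/- Let (V, E, o, t, inv) be a finite connected multigraph and let x : E → ℝ^d be a 1-form such that the set of fluxes of x along all closed walks equals ℤ^d. Then every minimal form μ ∈ F(x) takes values in ℤ^d, the subgroup of ℝ^d generated by the set of values {μ(e) : e ∈ E} equals ℤ^d, and the set of fluxes of μ along all closed walks equals ℤ^d. (Paper: Theorem 2.1(i): the image of the minimal form μ generates the group ℤ^d and the image of its flux function satisfies Φ_μ(C) = ℤ^d; stated on the fundamental graph.) -/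
open scoped Classical
open Finset

noncomputable section

/-!
Let `μ` be minimal with all closed-walk fluxes in a subgroup `L`, and suppose `μ e₀ ∉ L`. Let `U` be
the set of vertices reachable from `t e₀` along edges on which `μ` takes values in `L`. Then
`o e₀ ∉ U`, since otherwise `e₀` would close a walk whose flux is `μ e₀` modulo `L`. Subtracting
from `μ` the coboundary of `μ e₀ • 1_U` leaves all fluxes unchanged, keeps `μ = 0` edges at zero
(their endpoints lie on the same side of `U`), and kills `e₀`: a contradiction with minimality.
So `μ` is `ℤ^d`-valued, and its values generate its fluxes, which are those of `x`.
-/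

open Relation

section MinimalForm

variable {V E W : Type} [AddCommGroup W] {o t : E → V}

def IsOneForm (inv : E → E) (b : E → W) : Prop :=
  ∀ e, b (inv e) = -b e

def IsMinimalForm [Fintype E] (o t : E → V) (inv : E → E) (μ : E → W) : Prop :=
  ∀ b : E → W, IsOneForm inv b → SameFlux o t μ b → suppCard μ ≤ suppCard b

def IsWalk (o t : E → V) {k : ℕ} (c : Fin (k + 1) → E) (u v : V) : Prop :=
  (∀ i : Fin k, t (c i.castSucc) = o (c i.succ)) ∧ o (c 0) = u ∧ t (c (Fin.last k)) = v

def AdjVia (o t : E → V) (S : Set E) (u v : V) : Prop :=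
  ∃ e ∈ S, o e = u ∧ t e = v

theorem isWalk_single (e : E) : IsWalk o t (fun _ : Fin 1 => e) (o e) (t e) :=
  ⟨Fin.elim0, rfl, rfl⟩

theorem IsWalk.isClosedWalk {k : ℕ} {c : Fin (k + 1) → E} {u : V} (hc : IsWalk o t c u u) :
    IsClosedWalk o t c :=
  ⟨hc.1, hc.2.2.trans hc.2.1.symm⟩

theorem IsWalk.cons {k : ℕ} {c : Fin (k + 1) → E} {u v : V} (hc : IsWalk o t c u v) {e : E}
    (he : t e = u) : IsWalk o t (Fin.cons e c : Fin (k + 2) → E) (o e) v := by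
  obtain ⟨hchain, rfl, rfl⟩ := hc
  refine ⟨fun i => ?_, rfl, by simp⟩
  cases i using Fin.cases with
  | zero => simpa using he
  | succ i => simpa [← Fin.succ_castSucc] using hchain i

theorem IsClosedWalk.sum_coboundary {k : ℕ} {c : Fin (k + 1) → E} (hc : IsClosedWalk o t c)
    (f : V → W) : ∑ i, (f (t (c i)) - f (o (c i))) = 0 := by
  rw [Finset.sum_sub_distrib, Fin.sum_univ_castSucc, Fin.sum_univ_succ (f := fun i => f (o (c i)))]
  simp only [hc.1, hc.2]
  abel

theorem sameFlux_sub_coboundary (μ : E → W) (f : V → W) :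
    SameFlux o t μ fun e => μ e - (f (t e) - f (o e)) := by
  intro k c hc
  rw [Finset.sum_sub_distrib, hc.sum_coboundary f, sub_zero]

theorem SameFlux.trans {b₁ b₂ b₃ : E → W} (h₁₂ : SameFlux o t b₁ b₂) (h₂₃ : SameFlux o t b₂ b₃) :
    SameFlux o t b₁ b₃ :=
  fun k c hc => (h₁₂ k c hc).trans (h₂₃ k c hc)

theorem SameFlux.fluxSet_eq {b₁ b₂ : E → W} (h : SameFlux o t b₁ b₂) :
    fluxSet o t b₁ = fluxSet o t b₂ := by
  ext w
  constructor
  · rintro ⟨k, c, hc, rfl⟩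
    exact ⟨k, c, hc, (h k c hc).symm⟩
  · rintro ⟨k, c, hc, rfl⟩
    exact ⟨k, c, hc, h k c hc⟩

theorem AdjVia.reflTransGen_iff {inv : E → E} (hoi : ∀ e, o (inv e) = t e)
    (hti : ∀ e, t (inv e) = o e) {S : Set E} {e : E} (he : e ∈ S) (he' : inv e ∈ S) {u : V} :
    ReflTransGen (AdjVia o t S) u (o e) ↔ ReflTransGen (AdjVia o t S) u (t e) :=
  ⟨fun h => h.tail ⟨e, he, rfl, rfl⟩, fun h => h.tail ⟨inv e, he', hoi e, hti e⟩⟩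

/-- Followed by the path from `u` to `v`, whose edges carry values in `L`, the walk `c` closes up. -/
theorem flux_mem_of_reflTransGen {L : AddSubgroup W} {μ : E → W} (hL : fluxSet o t μ ⊆ L)
    {u v : V} (h : ReflTransGen (AdjVia o t (μ ⁻¹' L)) u v) {k : ℕ} {c : Fin (k + 1) → E}
    (hc : IsWalk o t c v u) : ∑ i, μ (c i) ∈ L := by
  induction h generalizing k c with
  | refl => exact hL ⟨k, c, hc.isClosedWalk, rfl⟩
  | tail _ hadj ih =>
    obtain ⟨e, he, rfl, rfl⟩ := hadj
    have hcons := ih (hc.cons rfl)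
    rw [Fin.sum_univ_succ] at hcons
    simp only [Fin.cons_zero, Fin.cons_succ] at hcons
    exact (L.add_mem_cancel_left he).mp hcons

theorem suppCard_lt_suppCard [Fintype E] {a b : E → W} (h : ∀ e, a e = 0 → b e = 0) {e₀ : E}
    (ha : a e₀ ≠ 0) (hb : b e₀ = 0) : suppCard b < suppCard a := by
  refine Finset.card_lt_card ((Finset.ssubset_iff_of_subset ?_).mpr ⟨e₀, by simp [ha], by simp [hb]⟩)
  intro e
  simpa using mt (h e)

theorem IsMinimalForm.mem_of_fluxSet_subset [Fintype E] {inv : E → E}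
    (hoi : ∀ e, o (inv e) = t e) (hti : ∀ e, t (inv e) = o e) {L : AddSubgroup W} {μ : E → W}
    (hmin : IsMinimalForm o t inv μ) (hμ : IsOneForm inv μ) (hL : fluxSet o t μ ⊆ L) (e₀ : E) :
    μ e₀ ∈ L := by
  by_contra hout
  set U : Set V := {v | ReflTransGen (AdjVia o t (μ ⁻¹' L)) (t e₀) v}
  have hU_iff : ∀ e, μ e ∈ L → (o e ∈ U ↔ t e ∈ U) := fun e he =>
    AdjVia.reflTransGen_iff hoi hti he (by simpa [Set.mem_preimage, hμ e] using he)
  have hU_t : t e₀ ∈ U := ReflTransGen.refl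
  have hU_o : o e₀ ∉ U := fun h => hout (by simpa using flux_mem_of_reflTransGen hL h (isWalk_single e₀))
  set f : V → W := U.indicator fun _ => μ e₀
  set b : E → W := fun e => μ e - (f (t e) - f (o e))
  have hb : IsOneForm inv b := fun e => by
    simp only [b, hμ e, hoi, hti]
    abel
  have hsupp : ∀ e, μ e = 0 → b e = 0 := fun e he => by
    have hiff := hU_iff e (he ▸ L.zero_mem)
    by_cases ho : o e ∈ U
    · simp [b, f, he, ho, hiff.mp ho]
    · simp [b, f, he, ho, mt hiff.mpr ho]
  have hbe₀ : b e₀ = 0 := by simp [b, f, hU_t, hU_o]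
  have hμe₀ : μ e₀ ≠ 0 := fun h => hout (h ▸ L.zero_mem)
  exact (hmin b hb (sameFlux_sub_coboundary μ f)).not_gt (suppCard_lt_suppCard hsupp hμe₀ hbe₀)

theorem closure_range_eq_of_fluxSet_eq {L : AddSubgroup W} {μ : E → W} (hval : ∀ e, μ e ∈ L)
    (hflux : fluxSet o t μ = L) : AddSubgroup.closure (Set.range μ) = L := by
  refine le_antisymm ((AddSubgroup.closure_le L).mpr (Set.range_subset_iff.mpr hval)) fun w hw => ?_
  rw [← SetLike.mem_coe, ← hflux] at hw
  obtain ⟨k, c, -, rfl⟩ := hw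
  exact AddSubgroup.sum_mem _ fun i _ => AddSubgroup.subset_closure ⟨c i, rfl⟩

end MinimalForm

def intLatticeSubgroup (d : ℕ) : AddSubgroup (Fin d → ℝ) :=
  AddSubgroup.pi Set.univ fun _ => (Int.castAddHom ℝ).range

theorem coe_intLatticeSubgroup (d : ℕ) : (intLatticeSubgroup d : Set (Fin d → ℝ)) = intLattice d := by
  ext w
  simp only [intLatticeSubgroup, intLattice, SetLike.mem_coe, AddSubgroup.mem_pi, Set.mem_univ,
    true_implies, AddMonoidHom.mem_range, Int.coe_castAddHom, Set.mem_ofPred_eq, eq_comm]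

theorem minimal_form_integer_values_general
    {V E : Type} [Fintype E] {d : ℕ}
    (o t : E → V) (inv : E → E)
    (hoi : ∀ e, o (inv e) = t e) (hti : ∀ e, t (inv e) = o e)
    (x : E → Fin d → ℝ)
    (hflux : fluxSet o t x = intLattice d) :
    ∀ μ : E → Fin d → ℝ, (∀ e, μ (inv e) = - μ e) → SameFlux o t x μ →
      (∀ b : E → Fin d → ℝ, (∀ e, b (inv e) = - b e) → SameFlux o t x b →
        suppCard μ ≤ suppCard b) →
      (∀ e i, ∃ z : ℤ, μ e i = (z : ℝ)) ∧
      (AddSubgroup.closure (Set.range μ) : Set (Fin d → ℝ)) = intLattice d ∧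
      fluxSet o t μ = intLattice d := by
  intro μ hμ hxμ hmin
  have hfluxμ : fluxSet o t μ = intLatticeSubgroup d := by
    rw [coe_intLatticeSubgroup, ← hflux, hxμ.fluxSet_eq]
  have hμmin : IsMinimalForm o t inv μ := fun b hb hμb => hmin b hb (hxμ.trans hμb)
  have hval := hμmin.mem_of_fluxSet_subset hoi hti hμ hfluxμ.subset
  refine ⟨fun e => ?_, ?_, hfluxμ.trans (coe_intLatticeSubgroup d)⟩
  · exact (coe_intLatticeSubgroup d ▸ hval e : μ e ∈ intLattice d)
  · rw [closure_range_eq_of_fluxSet_eq hval hfluxμ, coe_intLatticeSubgroup]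

/-- If the fluxes of the 1-form `x` along all closed walks form exactly `ℤ^d`,
then every minimal form `μ ∈ F(x)` takes integer values, the subgroup of `ℝ^d`
generated by its values is exactly `ℤ^d`, and its flux set is `ℤ^d`. -/
theorem minimal_form_integer_values
    {V E : Type} [Fintype V] [Fintype E] [Nonempty V] {d : ℕ}
    (o t : E → V) (inv : E → E)
    (hfp : ∀ e, inv e ≠ e) (hinv : ∀ e, inv (inv e) = e)
    (hoi : ∀ e, o (inv e) = t e) (hti : ∀ e, t (inv e) = o e)
    (hconn : MGConnected o t)
    (x : E → Fin d → ℝ) (hx : ∀ e, x (inv e) = - x e)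
    (hflux : fluxSet o t x = intLattice d) :
    ∀ μ : E → Fin d → ℝ, (∀ e, μ (inv e) = - μ e) → SameFlux o t x μ →
      (∀ b : E → Fin d → ℝ, (∀ e, b (inv e) = - b e) → SameFlux o t x b →
        suppCard μ ≤ suppCard b) →
      (∀ e i, ∃ z : ℤ, μ e i = (z : ℝ)) ∧
      (AddSubgroup.closure (Set.range μ) : Set (Fin d → ℝ)) = intLattice d ∧
      fluxSet o t μ = intLattice d :=
  minimal_form_integer_values_general o t inv hoi hti x hflux
end
end
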